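/- arXiv:2310.16294 — 2 statements merged into one kernel-verified Lean document; each statement's English description precedes it below -/
import Mathlib

section
/- Suppose each item d in a finite set D is independently assigned to group k with probability p_k, and the per-item metric decomposes as U(d) = u(d)·h(R(d)) for a merged random ranker R. Then the conditional expectation (over the experiment randomness, given features) of the normalized group-k readout (1/p_k)·∑_{d ∈ D_k} U(d) equals ∑_{j} u(J_k(j))·h^k(j), where J_k is the inverse of ranker R_k and h^k(j) = ∑_{j'} P(R(J_k(j)) = j' | J_k(j) ∈ D_k)·h(j'). -/
/-!
By linearity the expectation splits over the items. For one item `d`, the rank `R(d)` takes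
finitely many values, so the integral of `u(d)·h(R(d))` over the event `A d` is the finite sum
of `u(d)·h(j')` weighted by `μ(A d ∩ {R(d) = j'})`. Since `μ(A d) = p`, dividing by `p` turns
these weights into the conditional probabilities `θ`, and reindexing the items as `d = J_k(j)`
gives the convoluted readout.
-/

open MeasureTheory

section

variable {Ω J E : Type*} [MeasurableSpace Ω] [MeasurableSpace J] [Fintype J]
  [MeasurableSingletonClass J] [NormedAddCommGroup E]
  {μ : Measure Ω} [IsFiniteMeasure μ] {X : Ω → J}

lemma integrable_comp_of_fintype (hX : Measurable X) (g : J → E) :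
    Integrable (fun ω => g (X ω)) μ :=
  Integrable.of_finite.comp_measurable hX

lemma setIntegral_comp_eq_sum [NormedSpace ℝ E] [CompleteSpace E] (hX : Measurable X)
    (A : Set Ω) (g : J → E) :
    ∫ ω in A, g (X ω) ∂μ = ∑ j, μ.real (A ∩ X ⁻¹' {j}) • g j := by
  rw [← integral_map hX.aemeasurable Integrable.of_finite.aestronglyMeasurable,
    integral_fintype Integrable.of_finite]
  refine Finset.sum_congr rfl fun j _ => ?_
  rw [map_measureReal_apply hX (measurableSet_singleton j),
    measureReal_restrict_apply (hX (measurableSet_singleton j)), Set.inter_comm]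

end

/-- the expectation (over the experiment randomness) of the
normalized group-`k` readout `(1/p)·∑_{d ∈ D_k} u(d)·h(R(d))` equals
`∑_j u(J_k(j))·h^k(j)`, where `J_k = R_k⁻¹` and
`h^k(j) = ∑_{j'} P(R(J_k(j)) = j' | J_k(j) ∈ D_k)·h(j')`. -/
theorem expected_readout_eq_convoluted {Ω D : Type*} [MeasurableSpace Ω] [Fintype D]
    (μ : Measure Ω) [IsProbabilityMeasure μ]
    (p : ℝ) (hp : 0 < p)
    (A : D → Set Ω) (hA : ∀ d, MeasurableSet (A d))
    (hAp : ∀ d, μ (A d) = ENNReal.ofReal p)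
    (R : Ω → D ≃ Fin (Fintype.card D))
    (hR : ∀ (d : D) (j : Fin (Fintype.card D)), MeasurableSet {ω | R ω d = j})
    (Rk : D ≃ Fin (Fintype.card D))
    (u : D → ℝ) (h : Fin (Fintype.card D) → ℝ) :
    ∫ ω, (1 / p) * ∑ d, (A d).indicator (fun _ => (1 : ℝ)) ω * (u d * h (R ω d)) ∂μ
      = ∑ j, u (Rk.symm j) *
          ∑ j', ((μ (A (Rk.symm j) ∩ {ω | R ω (Rk.symm j) = j'})).toReal
                    / (μ (A (Rk.symm j))).toReal) * h j' := by
  have hRd (d : D) : Measurable fun ω => R ω d := measurable_to_countable' (hR d)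
  have readout_eq (d : D) (ω : Ω) :
      (A d).indicator (fun _ => (1 : ℝ)) ω * (u d * h (R ω d))
        = (A d).indicator (fun ω => u d * h (R ω d)) ω := by
    simpa only [one_mul] using (Set.indicator_mul_left (i := ω) (A d) (fun _ => (1 : ℝ))
      fun ω => u d * h (R ω d)).symm
  have item_integral_eq (d : D) : ∫ ω, (A d).indicator (fun ω => u d * h (R ω d)) ω ∂μ
      = u d * ∑ j', μ.real (A d ∩ {ω | R ω d = j'}) * h j' := by
    rw [integral_indicator (hA d), integral_const_mul, setIntegral_comp_eq_sum (hRd d)]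
    rfl
  have hμA (d : D) : (μ (A d)).toReal = p := by rw [hAp, ENNReal.toReal_ofReal hp.le]
  simp_rw [readout_eq]
  rw [integral_const_mul, integral_finsetSum _ fun d _ =>
      ((integrable_comp_of_fintype (hRd d) h).const_mul (u d)).indicator (hA d),
    ← Rk.symm.sum_comp, Finset.mul_sum]
  refine Finset.sum_congr rfl fun j _ => ?_
  rw [item_integral_eq, hμA, Finset.mul_sum, Finset.mul_sum, Finset.mul_sum]
  refine Finset.sum_congr rfl fun j' _ => ?_
  rw [measureReal_def]
  ring
end

section
/- Suppose the merged ranker R in a counterfactual interleaving design is consistent (its convolution kernels θ_{k,j} do not depend on the group k) and monotonic (θ_j is nondecreasing in j in the stochastic order), and suppose one of the rankers R_k ranks items in descending order of utility u. Then the expected experiment readout of group k is at least that of every other group: for all k' ≠ k, ∑_j u(J_k(j))·h'(j) ≥ ∑_j u(J_{k'}(j))·h'(j), where h'(j) = ∑_{j'} θ_j(j')·h(j') is the common convoluted attention function. -/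
private lemma sum_Iic_eq_range {n : ℕ} (a : Fin n → ℝ) (i : ℕ) (hi : i < n) :
    ∑ y ∈ Finset.Iic (⟨i, hi⟩ : Fin n), a y
      = ∑ j ∈ Finset.range (i + 1), (if h : j < n then a ⟨j, h⟩ else 0) := by
  refine Finset.sum_nbij' (fun y => (y : ℕ)) (fun j => if h : j < n then ⟨j, h⟩ else ⟨i, hi⟩)
    ?_ ?_ ?_ ?_ ?_
  · intro y hy
    simp only [Finset.mem_Iic, Fin.le_def] at hy
    simpa [Finset.mem_range] using Nat.lt_succ_of_le hy
  · intro j hj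
    simp only [Finset.mem_range] at hj
    have hjn : j < n := lt_of_lt_of_le hj hi
    simp [hjn, Finset.mem_Iic, Fin.le_def, Nat.lt_succ_iff.mp hj]
  · intro y hy; simp [y.isLt]
  · intro j hj
    simp only [Finset.mem_range] at hj
    have hjn : j < n := lt_of_lt_of_le hj hi
    simp [hjn]
  · intro y hy; simp [y.isLt]

private lemma abel_nonneg {n : ℕ} (a g : Fin n → ℝ)
    (ha : ∀ x, 0 ≤ ∑ y ∈ Finset.Iic x, a y)
    (hsum : ∑ y, a y = 0)
    (hg : Antitone g) : 0 ≤ ∑ y, a y * g y := by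
  rcases Nat.eq_zero_or_pos n with hn | hn
  · subst hn; simp
  set b : ℕ → ℝ := fun i => if h : i < n then a ⟨i, h⟩ else 0 with hb
  set G : ℕ → ℝ := fun i => if h : i < n then g ⟨i, h⟩ else 0 with hG
  have key : ∑ y, a y * g y = ∑ i ∈ Finset.range n, G i • b i := by
    rw [← Fin.sum_univ_eq_sum_range (fun i => G i • b i) n]
    refine Finset.sum_congr rfl fun y _ => ?_
    simp [hb, hG, y.isLt, mul_comm, smul_eq_mul]
  rw [key, Finset.sum_range_by_parts]
  have htot : ∑ i ∈ Finset.range n, b i = 0 := by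
    rw [← Fin.sum_univ_eq_sum_range b n]
    rw [← hsum]
    refine Finset.sum_congr rfl fun y _ => ?_
    simp [hb, y.isLt]
  rw [htot, smul_zero, zero_sub, neg_nonneg]
  refine Finset.sum_nonpos fun i hi => ?_
  simp only [Finset.mem_range] at hi
  have hi1 : i + 1 < n := by omega
  have hin : i < n := by omega
  have h1 : G (i + 1) - G i ≤ 0 := by
    simp only [hG, dif_pos hi1, dif_pos hin, sub_nonpos]
    exact hg (by simp [Fin.le_def])
  have h2 : 0 ≤ ∑ j ∈ Finset.range (i + 1), b j := by
    rw [← sum_Iic_eq_range a i hin]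
    exact ha _
  rw [smul_eq_mul]
  exact mul_nonpos_iff.mpr (Or.inr ⟨h1, h2⟩)

/-- if the merged ranker is consistent (a common kernel `θ_j` for
all groups) and monotonic (kernels nondecreasing in `j` in stochastic order),
and ranker `R k` ranks items in descending order of `u`, then the expected
experiment readout of group `k`, computed with the common convoluted attention
function `h'(j) = ∑_{j'} θ_j(j')·h(j')`, is at least that of every other group. -/
theorem consistent_monotonic_readout_maximal {D : Type*} [Fintype D] {K : ℕ}
    (u : D → ℝ) (hu : ∀ d, 0 ≤ u d)
    (h : Fin (Fintype.card D) → ℝ) (hh : ∀ j, 0 ≤ h j) (hmono : Antitone h)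
    (θ : Fin (Fintype.card D) → Fin (Fintype.card D) → ℝ)
    (hθnn : ∀ j j', 0 ≤ θ j j')
    (hθsum : ∀ j, ∑ j', θ j j' = 1)
    (hθord : ∀ j j'' : Fin (Fintype.card D), j ≤ j'' →
      ∀ x : Fin (Fintype.card D),
        ∑ y ∈ Finset.Iic x, θ j'' y ≤ ∑ y ∈ Finset.Iic x, θ j y)
    (R : Fin K → (D ≃ Fin (Fintype.card D))) (k : Fin K)
    (hRk : ∀ d d', u d' < u d → R k d < R k d') :
    ∀ k', k' ≠ k →
      ∑ j, u ((R k').symm j) * (∑ j', θ j j' * h j')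
        ≤ ∑ j, u ((R k).symm j) * (∑ j', θ j j' * h j') := by
  intro k' _
  set g' : Fin (Fintype.card D) → ℝ := fun j => ∑ j', θ j j' * h j' with hg'
  have hg'anti : Antitone g' := by
    intro j j'' hjj
    have : 0 ≤ ∑ y, (θ j y - θ j'' y) * h y := by
      refine abel_nonneg _ h ?_ ?_ hmono
      · intro x
        rw [Finset.sum_sub_distrib, sub_nonneg]
        exact hθord j j'' hjj x
      · rw [Finset.sum_sub_distrib, hθsum, hθsum, sub_self]
    simp only [sub_mul, Finset.sum_sub_distrib, sub_nonneg] at this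
    exact this
  have reindex : ∀ m : Fin K, ∑ j, u ((R m).symm j) * g' j = ∑ d, u d * g' (R m d) := by
    intro m
    rw [← Equiv.sum_comp (R m) (fun j => u ((R m).symm j) * g' j)]
    simp
  rw [reindex, reindex]
  have hmv : Monovary u (g' ∘ (R k)) := by
    intro i j hij
    by_contra hui
    push_neg at hui
    have := hRk i j hui
    exact absurd (hg'anti this.le) (not_le.mpr hij)
  have := hmv.sum_smul_comp_perm_le_sum_smul (σ := (R k').trans (R k).symm)
  simpa [smul_eq_mul, Function.comp] using this
end
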